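/- There exists a constant C_0 > 0, depending only on the doubling constant of μ, the uniformity constant C_U and diam_d(∂Ω), such that for every non-negative integer n one has C_0^{-1}·μ(Ω_n) ≤ μ(Ω_{n+1}) ≤ C_0·μ(Ω_n). Moreover, for each non-negative integer n there exists a point y_n ∈ Ω_n with d_Ω(y_n) = 2^n such that C_0^{-1}·μ(B_d(y_n,2^n)) ≤ μ(Ω_n) ≤ C_0·μ(B_d(y_n,2^n)). -/

import Mathlib

open Set Metric MeasureTheory Filter
open scoped ENNReal NNReal Topology

noncomputable section

variable {X : Type*} [MetricSpace X] [MeasurableSpace X]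

/-- Distance to the boundary `Ωᶜ`. -/
def dOm (Ω : Set X) (x : X) : ℝ := Metric.infDist x Ωᶜ

/-- A 1-Lipschitz (arclength-parametrized) curve in `Ω` from `x` to `y`, of length `L`. -/
def IsCurveIn (Ω : Set X) (L : ℝ) (γ : ℝ → X) (x y : X) : Prop :=
  0 < L ∧ LipschitzOnWith 1 γ (Set.Icc 0 L) ∧ (∀ t ∈ Set.Icc 0 L, γ t ∈ Ω) ∧
    γ 0 = x ∧ γ L = y

/-- `Ω` is a `C`-uniform domain. -/
def IsUniformDomain (Ω : Set X) (C : ℝ) : Prop :=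
  ∀ x ∈ Ω, ∀ y ∈ Ω, x ≠ y → ∃ L γ, IsCurveIn Ω L γ x y ∧ L ≤ C * dist x y ∧
    ∀ t ∈ Set.Icc 0 L, min t (L - t) ≤ C * dOm Ω (γ t)

/-- The deformed length metric `d_φ`. -/
def dPhi (Ω : Set X) (φ : ℝ → ℝ) (x y : X) : ℝ :=
  sInf { l : ℝ | ∃ L γ, IsCurveIn Ω L γ x y ∧ l = ∫ s in (0:ℝ)..L, φ (dOm Ω (γ s)) }

/-- The bands `Ω_n`. -/
def band (Ω : Set X) : ℕ → Set X
  | 0 => {x | x ∈ Ω ∧ dOm Ω x ≤ 1}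
  | (n+1) => {x | x ∈ Ω ∧ (2:ℝ) ^ n < dOm Ω x ∧ dOm Ω x ≤ (2:ℝ) ^ (n+1)}

/-- The dampening function hypotheses. -/
def IsDampening (φ : ℝ → ℝ) (Cφ τ : ℝ) : Prop :=
  ContinuousOn φ (Set.Ioi 0) ∧ AntitoneOn φ (Set.Ioi 0) ∧
  (∀ t, 0 < t → 0 < φ t ∧ φ t ≤ 1) ∧ (∀ t, 0 < t → t ≤ 1 → φ t = 1) ∧
  MeasureTheory.IntegrableOn φ (Set.Ioi 0) ∧
  (2 < Cφ ∧ ∀ t, 0 < t → φ t ≤ Cφ * φ (2 * t)) ∧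
  (2 < τ ∧ ∀ t, 0 < t → τ * φ (2 * t) ≤ φ t)

/-- Control of the tails of `Σ φ(2ⁿ)^p μ(Ωₙ)`. -/
def TailCtrl (Ω : Set X) (μ : Measure X) (φ : ℝ → ℝ) (p : ℝ) (C6 : ℝ≥0) : Prop :=
  ∀ m : ℕ, 1 ≤ m →
    ∑' k : ℕ, ENNReal.ofReal (φ ((2:ℝ) ^ (m + k)) ^ p) * μ (band Ω (m + k)) ≤
      C6 * (ENNReal.ofReal (φ ((2:ℝ) ^ m) ^ p) * μ (band Ω m))

/-- `g` is an upper gradient of `u` along 1-Lipschitz curves in `S`. -/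
def IsUpperGradientOn {Y : Type*} [MetricSpace Y] (S : Set Y) (g : Y → ℝ≥0∞) (u : Y → ℝ) :
    Prop :=
  ∀ L : ℝ, 0 < L → ∀ γ : ℝ → Y, LipschitzOnWith 1 γ (Set.Icc 0 L) →
    (∀ t ∈ Set.Icc 0 L, γ t ∈ S) →
    ENNReal.ofReal |u (γ L) - u (γ 0)| ≤ ∫⁻ s in Set.Ioc (0:ℝ) L, g (γ s)

/-- Sub-Whitney `p`-Poincaré inequality on `Ω`. -/
def SubWhitneyPI (Ω : Set X) (μ : Measure X) (p : ℝ) : Prop :=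
  ∃ CP > (0:ℝ), ∃ lam ≥ (1:ℝ), ∃ A ≥ (1:ℝ), ∀ x ∈ Ω, ∀ r : ℝ, 0 < r → r ≤ dOm Ω x / A →
    ∀ u : X → ℝ, ∀ g : X → ℝ≥0∞, IsUpperGradientOn Ω g u →
      ENNReal.ofReal (⨍ y in Metric.ball x r, |u y - ⨍ z in Metric.ball x r, u z ∂μ| ∂μ) ≤
        ENNReal.ofReal (CP * r) * (⨍⁻ y in Metric.ball x (lam * r), g y ^ p ∂μ) ^ (1/p)

end

/-!
The boundary is bounded, so all points with `dOm ≤ s` (`s ≥ 1`) lie within `O(s)` of each other,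
and iterating the doubling condition compares the measure of any set of such points with the
measure of any ball of radius `s / 4` centred at one of them. A ball of radius `2ⁿ / 4` fits inside
the band `Ωₙ` around a point where `dOm = 3 · 2ⁿ / 4`; such points (and one where `dOm = 2ⁿ`)
exist because `dOm` is continuous along a curve joining a point near the boundary to a point far
from it.
-/

section DistToBoundary

variable {X : Type*} [MetricSpace X] {Ω : Set X}

lemma mem_of_dOm_pos {x : X} (h : 0 < dOm Ω x) : x ∈ Ω := by
  by_contra hx
  exact h.ne' (Metric.infDist_zero_of_mem hx)

lemma dOm_le_dOm_add_dist (Ω : Set X) (x y : X) : dOm Ω x ≤ dOm Ω y + dist x y :=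
  Metric.infDist_le_infDist_add_dist

lemma dist_le_dOm_add {b : X} {R : ℝ} (hne : Ωᶜ.Nonempty) (hR : Ωᶜ ⊆ Metric.closedBall b R)
    (x : X) : dist x b ≤ dOm Ω x + R := by
  have : dist x b - R ≤ dOm Ω x := (Metric.le_infDist hne).2 fun q hq => by
    linarith [dist_triangle x q b, Metric.mem_closedBall.1 (hR hq)]
  linarith

lemma exists_dOm_gt (hΩ : ¬ Bornology.IsBounded Ω) (hne : Ωᶜ.Nonempty)
    (hbdd : Bornology.IsBounded Ωᶜ) (v : ℝ) : ∃ x ∈ Ω, v < dOm Ω x := by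
  obtain ⟨R, hR⟩ := hbdd.subset_closedBall hne.some
  obtain ⟨x, hxΩ, hx⟩ : ∃ x ∈ Ω, v + R < dist x hne.some := by
    by_contra! h
    exact hΩ (Metric.isBounded_closedBall.subset fun x hx => Metric.mem_closedBall.2 (h x hx))
  exact ⟨x, hxΩ, by linarith [dist_le_dOm_add hne hR x]⟩

lemma exists_dOm_lt (hΩ : Dense Ω) (hne : Ωᶜ.Nonempty) {v : ℝ} (hv : 0 < v) :
    ∃ x ∈ Ω, dOm Ω x < v := by
  obtain ⟨b, hb⟩ := hne
  obtain ⟨x, hxΩ, hx⟩ := Metric.mem_closure_iff.1 (hΩ b) v hv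
  exact ⟨x, hxΩ, (Metric.infDist_le_dist_of_mem hb).trans_lt (dist_comm x b ▸ hx)⟩

lemma exists_mem_dOm_eq_of_isCurveIn {L : ℝ} {γ : ℝ → X} {x y : X} (hγ : IsCurveIn Ω L γ x y)
    {v : ℝ} (hv : v ∈ Set.Icc (dOm Ω x) (dOm Ω y)) : ∃ z ∈ Ω, dOm Ω z = v := by
  obtain ⟨hL, hlip, hmem, rfl, rfl⟩ := hγ
  obtain ⟨t, ht, hvt⟩ := intermediate_value_Icc hL.le
    ((Metric.continuous_infDist_pt Ωᶜ).comp_continuousOn hlip.continuousOn) hv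
  exact ⟨γ t, hmem t ht, hvt⟩

lemma exists_mem_dOm_eq {CU : ℝ} (hΩ : Dense Ω) (hunbdd : ¬ Bornology.IsBounded Ω)
    (hne : Ωᶜ.Nonempty) (hbdd : Bornology.IsBounded Ωᶜ) (hunif : IsUniformDomain Ω CU)
    {v : ℝ} (hv : 0 < v) : ∃ z ∈ Ω, dOm Ω z = v := by
  obtain ⟨x, hxΩ, hx⟩ := exists_dOm_lt hΩ hne hv
  obtain ⟨y, hyΩ, hy⟩ := exists_dOm_gt hunbdd hne hbdd v
  obtain ⟨L, γ, hγ, -⟩ := hunif x hxΩ y hyΩ (by rintro rfl; linarith)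
  exact exists_mem_dOm_eq_of_isCurveIn hγ ⟨hx.le, hy.le⟩

lemma mem_band_of_lt_of_le {x : X} (n : ℕ) (hlo : (2:ℝ) ^ n / 2 < dOm Ω x)
    (hhi : dOm Ω x ≤ (2:ℝ) ^ n) : x ∈ band Ω n := by
  have hx : x ∈ Ω := mem_of_dOm_pos ((by positivity : (0:ℝ) < 2 ^ n / 2).trans hlo)
  cases n with
  | zero => exact ⟨hx, by simpa using hhi⟩
  | succ n => exact ⟨hx, by rwa [pow_succ, mul_div_cancel_right₀ _ two_ne_zero] at hlo, hhi⟩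

lemma dOm_le_of_mem_band {x : X} {n : ℕ} (hx : x ∈ band Ω n) : dOm Ω x ≤ (2:ℝ) ^ n := by
  cases n with
  | zero => simpa using hx.2
  | succ n => exact hx.2.2

lemma ball_subset_band {z : X} {n : ℕ} (hz : dOm Ω z = 3 * (2:ℝ) ^ n / 4) :
    Metric.ball z ((2:ℝ) ^ n / 4) ⊆ band Ω n := by
  intro w hw
  have hwz := Metric.mem_ball.1 hw
  have hlo := dOm_le_dOm_add_dist Ω z w
  have hhi := dOm_le_dOm_add_dist Ω w z
  rw [dist_comm] at hlo
  exact mem_band_of_lt_of_le n (by linarith) (by linarith)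

end DistToBoundary

section Doubling

variable {X : Type*} [MetricSpace X] [MeasurableSpace X] {Ω : Set X} {μ : Measure X} {C : ℝ≥0}

lemma measure_ball_two_pow_mul_le
    (hdbl : ∀ x ∈ Ω, ∀ r : ℝ, 0 < r → μ (Metric.ball x (2 * r)) ≤ C * μ (Metric.ball x r))
    {x : X} (hx : x ∈ Ω) {r : ℝ} (hr : 0 < r) (k : ℕ) :
    μ (Metric.ball x ((2:ℝ) ^ k * r)) ≤ (C : ℝ≥0∞) ^ k * μ (Metric.ball x r) := by
  induction k with
  | zero => simp
  | succ k ih =>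
    calc μ (Metric.ball x ((2:ℝ) ^ (k + 1) * r))
        = μ (Metric.ball x (2 * ((2:ℝ) ^ k * r))) := by rw [pow_succ']; ring_nf
      _ ≤ C * μ (Metric.ball x ((2:ℝ) ^ k * r)) := hdbl x hx _ (by positivity)
      _ ≤ C * ((C : ℝ≥0∞) ^ k * μ (Metric.ball x r)) := by gcongr
      _ = (C : ℝ≥0∞) ^ (k + 1) * μ (Metric.ball x r) := by ring

lemma measure_le_pow_mul_of_dOm_le
    (hdbl : ∀ x ∈ Ω, ∀ r : ℝ, 0 < r → μ (Metric.ball x (2 * r)) ≤ C * μ (Metric.ball x r))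
    {b : X} {R : ℝ} (hne : Ωᶜ.Nonempty) (hR : Ωᶜ ⊆ Metric.closedBall b R)
    {x : X} (hx : x ∈ Ω) {r t : ℝ} (hr : 0 < r) {k : ℕ} (hk : 2 * t + 2 * R < (2:ℝ) ^ k * r)
    (hxt : dOm Ω x ≤ t) {S T : Set X} (hS : ∀ w ∈ S, dOm Ω w ≤ t)
    (hT : Metric.ball x r ⊆ T) : μ S ≤ (C : ℝ≥0∞) ^ k * μ T := by
  have hSball : S ⊆ Metric.ball x ((2:ℝ) ^ k * r) := fun w hw => Metric.mem_ball.2 <| by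
    linarith [dist_triangle_right w x b, dist_le_dOm_add hne hR w, dist_le_dOm_add hne hR x, hS w hw]
  calc μ S ≤ μ (Metric.ball x ((2:ℝ) ^ k * r)) := measure_mono hSball
    _ ≤ (C : ℝ≥0∞) ^ k * μ (Metric.ball x r) := measure_ball_two_pow_mul_le hdbl hx hr k
    _ ≤ (C : ℝ≥0∞) ^ k * μ T := by gcongr

end Doubling

theorem comparable_layers_general
    {X : Type*} [MetricSpace X] [MeasurableSpace X]
    (Ω : Set X) (hΩdense : Dense Ω)
    (hΩunbdd : ¬ Bornology.IsBounded Ω)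
    (hbdry : Ωᶜ.Nonempty) (hbdrybdd : Bornology.IsBounded Ωᶜ)
    (CU : ℝ) (hUnif : IsUniformDomain Ω CU)
    (μ : Measure X)
    (Cμ : ℝ≥0) (hCμ : 1 ≤ Cμ)
    (hdbl : ∀ x ∈ Ω, ∀ r : ℝ, 0 < r →
      0 < μ (Metric.ball x r) ∧ μ (Metric.ball x r) < ⊤ ∧
      μ (Metric.ball x (2*r)) ≤ Cμ * μ (Metric.ball x r)) :
    ∃ C0 : ℝ≥0, 0 < C0 ∧
      ∀ n : ℕ,
        (μ (band Ω n) ≤ C0 * μ (band Ω (n+1)) ∧ μ (band Ω (n+1)) ≤ C0 * μ (band Ω n)) ∧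
        ∃ y ∈ band Ω n, dOm Ω y = (2:ℝ) ^ n ∧
          μ (Metric.ball y ((2:ℝ) ^ n)) ≤ C0 * μ (band Ω n) ∧
          μ (band Ω n) ≤ C0 * μ (Metric.ball y ((2:ℝ) ^ n)) := by
  obtain ⟨R, hR⟩ := hbdrybdd.subset_closedBall hbdry.some
  have hR0 : 0 ≤ R := Metric.nonempty_closedBall.1 (hbdry.mono hR)
  -- points with `dOm ≤ 2s` are within `4s + 2R ≤ (16 + 8R) s / 4` of each other, as `s ≥ 1`
  obtain ⟨K, hK⟩ := pow_unbounded_of_one_lt (16 + 8 * R) one_lt_two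
  refine ⟨Cμ ^ K, pow_pos (zero_lt_one.trans_le hCμ) K, fun n => ?_⟩
  set s : ℝ := 2 ^ n with hs_def
  have hs : 1 ≤ s := one_le_pow₀ one_le_two
  have compare : ∀ x ∈ Ω, dOm Ω x ≤ 2 * s → ∀ S T : Set X, (∀ w ∈ S, dOm Ω w ≤ 2 * s) →
      Metric.ball x (s / 4) ⊆ T → μ S ≤ (Cμ : ℝ≥0∞) ^ K * μ T := fun x hx hxs S T hS hT =>
    measure_le_pow_mul_of_dOm_le (fun x hx r hr => (hdbl x hx r hr).2.2) hbdry hR hx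
      (by positivity) (by nlinarith) hxs hS hT
  have exists_dOm_eq := fun v (hv : 0 < v) =>
    exists_mem_dOm_eq hΩdense hΩunbdd hbdry hbdrybdd hUnif hv
  obtain ⟨y, hyΩ, hy⟩ := exists_dOm_eq s (by positivity)
  obtain ⟨z, hzΩ, hz⟩ := exists_dOm_eq (3 * s / 4) (by positivity)
  obtain ⟨z', hz'Ω, hz'⟩ := exists_dOm_eq (3 * (2 * s) / 4) (by positivity)
  have hz_band : Metric.ball z (s / 4) ⊆ band Ω n := ball_subset_band hz
  have hz'_band : Metric.ball z' (s / 4) ⊆ band Ω (n + 1) :=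
    (Metric.ball_subset_ball (by rw [pow_succ']; linarith)).trans
      (ball_subset_band (n := n + 1) (by rw [hz', pow_succ']))
  have hband : ∀ w ∈ band Ω n, dOm Ω w ≤ 2 * s := fun w hw =>
    (dOm_le_of_mem_band hw).trans (by linarith)
  have hband' : ∀ w ∈ band Ω (n + 1), dOm Ω w ≤ 2 * s := fun w hw =>
    (dOm_le_of_mem_band hw).trans_eq (pow_succ' 2 n)
  have hball : ∀ w ∈ Metric.ball y s, dOm Ω w ≤ 2 * s := fun w hw => by
    linarith [dOm_le_dOm_add_dist Ω w y, Metric.mem_ball.1 hw]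
  refine ⟨⟨compare z' hz'Ω (by linarith) _ _ hband hz'_band,
    compare z hzΩ (by linarith) _ _ hband' hz_band⟩,
    y, mem_band_of_lt_of_le n (by linarith) hy.le, hy,
    compare z hzΩ (by linarith) _ _ hball hz_band,
    compare y hyΩ (by linarith) _ _ hband (Metric.ball_subset_ball (by linarith))⟩

theorem comparable_layers
    {X : Type*} [MetricSpace X] [MeasurableSpace X] [BorelSpace X] [CompleteSpace X]
    (Ω : Set X) (hΩopen : IsOpen Ω) (hΩdense : Dense Ω)
    (hΩunbdd : ¬ Bornology.IsBounded Ω)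
    (hbdry : Ωᶜ.Nonempty) (hbdrybdd : Bornology.IsBounded Ωᶜ)
    (CU : ℝ) (hCU : 1 ≤ CU) (hUnif : IsUniformDomain Ω CU)
    (μ : Measure X) (hsupp : μ Ωᶜ = 0)
    (Cμ : ℝ≥0) (hCμ : 1 ≤ Cμ)
    (hdbl : ∀ x ∈ Ω, ∀ r : ℝ, 0 < r →
      0 < μ (Metric.ball x r) ∧ μ (Metric.ball x r) < ⊤ ∧
      μ (Metric.ball x (2*r)) ≤ Cμ * μ (Metric.ball x r))
    (p : ℝ) (hp : 1 ≤ p) :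
    ∃ C0 : ℝ≥0, 0 < C0 ∧
      ∀ n : ℕ,
        (μ (band Ω n) ≤ C0 * μ (band Ω (n+1)) ∧ μ (band Ω (n+1)) ≤ C0 * μ (band Ω n)) ∧
        ∃ y ∈ band Ω n, dOm Ω y = (2:ℝ) ^ n ∧
          μ (Metric.ball y ((2:ℝ) ^ n)) ≤ C0 * μ (band Ω n) ∧
          μ (band Ω n) ≤ C0 * μ (Metric.ball y ((2:ℝ) ^ n)) :=
  comparable_layers_general Ω hΩdense hΩunbdd hbdry hbdrybdd CU hUnif μ Cμ hCμ hdbl
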